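/- Let $A \subset M$ be an expansive attractor for a homeomorphism $f : M \to M$ of a compact surface $M$. Then $M \setminus A$ has only finitely many connected components. -/

import Mathlib

/-!
A backward orbit of a point outside the attractor must leave the `α`-neighbourhood `U` of `A`.
Hence every complementary component has a backward image among the components that meet the
compact set `Uᶜ`, and by local connectedness there are only finitely many of those. Since `f⁻¹`
permutes the components injectively, a component whose backward orbit returns infinitely often
to a finite set is periodic, so all components lie on finitely many finite orbits.
-/

open Function Set

namespace Function

variable {α : Type*} {φ : α → α}

theorem Injective.isPeriodicPt_of_iterate_eq (hφ : Injective φ) {x : α} {a b : ℕ}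
    (hab : a ≤ b) (h : φ^[a] x = φ^[b] x) : IsPeriodicPt φ (b - a) x := by
  apply hφ.iterate a
  rw [← iterate_add_apply, Nat.add_sub_cancel' hab, h]

theorem Injective.mem_periodicPts_of_infinite_iterate_mem (hφ : Injective φ) {K : Set α}
    (hK : K.Finite) {x : α} (hx : {n | φ^[n] x ∈ K}.Infinite) : x ∈ periodicPts φ := by
  obtain ⟨a, -, b, -, hne, heq⟩ :=
    hx.exists_ne_map_eq_of_mapsTo (f := (φ^[·] x)) (fun _ hn => hn) hK
  rcases hne.lt_or_gt with hab | hab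
  · exact mk_mem_periodicPts (by omega) (hφ.isPeriodicPt_of_iterate_eq hab.le heq)
  · exact mk_mem_periodicPts (by omega) (hφ.isPeriodicPt_of_iterate_eq hab.le heq.symm)

theorem Injective.finite_of_forall_exists_iterate_mem (hφ : Injective φ) {S K : Set α}
    (hS : MapsTo φ S S) (hK : K.Finite) (hhit : ∀ x ∈ S, ∃ n, φ^[n] x ∈ K) : S.Finite := by
  refine (hK.biUnion fun k _ => (finite_Iio (minimalPeriod φ k)).image (φ^[·] k)).subset ?_
  intro x hxS
  have hper : x ∈ periodicPts φ := hφ.mem_periodicPts_of_infinite_iterate_mem hK <|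
    infinite_of_forall_exists_gt fun m => by
      obtain ⟨n, hn⟩ := hhit _ (hS.iterate (m + 1) hxS)
      exact ⟨n + (m + 1), by rwa [← iterate_add_apply] at hn, by omega⟩
  obtain ⟨p, hp, hpx⟩ := Function.mem_periodicPts.1 hper
  obtain ⟨n, hn⟩ := hhit x hxS
  have hk : φ^[n] x ∈ periodicPts φ := mk_mem_periodicPts hp (hpx.apply_iterate n)
  have hreturn : φ^[(p - 1) * n] (φ^[n] x) = x := by
    rw [← iterate_add_apply, show (p - 1) * n + n = p * n by
      rw [Nat.sub_one_mul, Nat.sub_add_cancel (Nat.le_mul_of_pos_left n hp)]]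
    exact (hpx.mul_const n).eq
  refine mem_biUnion hn ⟨(p - 1) * n % minimalPeriod φ (φ^[n] x),
    Nat.mod_lt _ (minimalPeriod_pos_of_mem_periodicPts hk), ?_⟩
  exact iterate_mod_minimalPeriod_eq.trans hreturn

end Function

theorem IsCompact.finite_image_connectedComponentIn {X : Type*} [TopologicalSpace X]
    [LocallyConnectedSpace X] {W K : Set X} (hK : IsCompact K) (hKW : K ⊆ interior W) :
    (connectedComponentIn W '' K).Finite := by
  obtain ⟨t, -, ht, hcover⟩ := hK.elim_finite_subcover_image
    (c := connectedComponentIn (interior W)) (fun _ _ => isOpen_interior.connectedComponentIn)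
    fun x hx => mem_biUnion hx (mem_connectedComponentIn (hKW hx))
  refine (ht.image (connectedComponentIn W)).subset ?_
  rintro _ ⟨y, hy, rfl⟩
  obtain ⟨x, hxt, hyx⟩ := mem_iUnion₂.1 (hcover hy)
  exact ⟨x, hxt, connectedComponentIn_eq (connectedComponentIn_mono _ interior_subset hyx)⟩

theorem Homeomorph.semiconj_connectedComponentIn {X : Type*} [TopologicalSpace X]
    (e : X ≃ₜ X) {F : Set X} (hF : e '' F = F) :
    Semiconj (connectedComponentIn F) e (Set.image e) := by
  intro x
  by_cases hx : x ∈ F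
  · rw [e.image_connectedComponentIn hx, hF]
  · have hex : e x ∉ F := by rwa [← hF, e.injective.mem_set_image]
    rw [connectedComponentIn_eq_empty hx, connectedComponentIn_eq_empty hex, image_empty]

theorem Homeomorph.finite_connectedComponentIn_compl_of_iInter_image_subset {X : Type*}
    [TopologicalSpace X] [CompactSpace X] [LocallyConnectedSpace X] (f : X ≃ₜ X) {A U : Set X}
    (hInv : f '' A = A) (hU : IsOpen U) (hAU : closure A ⊆ U)
    (hAttr : ⋂ n : ℕ, (⇑f)^[n] '' U ⊆ A) :
    (connectedComponentIn Aᶜ '' Aᶜ).Finite := by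
  have hInvc : f.symm '' Aᶜ = Aᶜ := by
    rw [f.symm.image_compl, f.image_symm, ← hInv, f.preimage_image, hInv]
  have hsemi := f.symm.semiconj_connectedComponentIn hInvc
  have hK : (connectedComponentIn Aᶜ '' Uᶜ).Finite :=
    hU.isClosed_compl.isCompact.finite_image_connectedComponentIn <| by
      rw [interior_compl]; exact compl_subset_compl.2 hAU
  refine f.symm.injective.image_injective.finite_of_forall_exists_iterate_mem ?_ hK ?_
  · rintro _ ⟨x, hx, rfl⟩
    exact ⟨f.symm x, hInvc ▸ mem_image_of_mem _ hx, hsemi x⟩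
  · rintro _ ⟨x, hx, rfl⟩
    obtain ⟨n, hn⟩ : ∃ n, x ∉ (⇑f)^[n] '' U := by simpa using fun h => hx (hAttr h)
    have hescape : (⇑f.symm)^[n] x ∉ U := fun h =>
      hn ⟨_, h, LeftInverse.iterate f.apply_symm_apply n x⟩
    exact ⟨n, _, hescape, hsemi.iterate_right n x⟩

theorem expansive_attractor_finitely_many_complementary_domains_general
    {M : Type*} [MetricSpace M] [CompactSpace M]
    [ChartedSpace (EuclideanSpace ℝ (Fin 2)) M]
    (f : M ≃ₜ M) (A : Set M) (hInv : f '' A = A) (α : ℝ) (hα : 0 < α)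
    (hAttr : ⋂ n : ℕ, (⇑f)^[n] '' Metric.thickening α A = A) :
    {C : Set M | ∃ x ∈ Aᶜ, C = connectedComponentIn Aᶜ x}.Finite := by
  have := ChartedSpace.locallyConnectedSpace (EuclideanSpace ℝ (Fin 2)) M
  refine (f.finite_connectedComponentIn_compl_of_iInter_image_subset hInv
    Metric.isOpen_thickening (Metric.closure_subset_thickening hα A) hAttr.subset).subset ?_
  rintro _ ⟨x, hx, rfl⟩
  exact ⟨x, hx, rfl⟩

/-- An expansive attractor of a homeomorphism of a compact surface has
finitely many complementary domains. -/
theorem expansive_attractor_finitely_many_complementary_domains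
    {M : Type*} [MetricSpace M] [CompactSpace M]
    [ChartedSpace (EuclideanSpace ℝ (Fin 2)) M]
    (f : M ≃ₜ M) (A : Set M) (hInv : f '' A = A) (α : ℝ) (hα : 0 < α)
    (hAttr : ⋂ n : ℕ, (⇑f)^[n] '' Metric.thickening α A = A)
    (hExp : ∀ x ∈ A, ∀ y ∈ A, x ≠ y →
      ∃ n : ℤ, α < dist ((f.toEquiv ^ n) x) ((f.toEquiv ^ n) y)) :
    {C : Set M | ∃ x ∈ Aᶜ, C = connectedComponentIn Aᶜ x}.Finite :=
  expansive_attractor_finitely_many_complementary_domains_general f A hInv α hα hAttr
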